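/- The generalized winding number is additive: if f, g : ℝ → S¹ are pre-periodic functions with generalized winding numbers a and b respectively (i.e. for lifts f̃, g̃ one has (f̃(x) − f̃(−x))/(2x) → a and (g̃(x) − g̃(−x))/(2x) → b as x → +∞), then the pointwise product f·g : ℝ → S¹ is pre-periodic and its generalized winding number equals a + b. -/
import Mathlib


open Filter

/-- A continuous function `f : ℝ → ℂ` taking values in the unit circle `S¹` is *pre-periodic*
if for every `ε > 0` there is a positive integer `N` such that
`|f (x + k * N) - f x| < ε` for all integers `k` and all real `x`. -/
def PrePeriodic (f : ℝ → ℂ) : Prop :=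
  Continuous f ∧ (∀ x : ℝ, ‖f x‖ = 1) ∧
    ∀ ε : ℝ, 0 < ε → ∃ N : ℕ, 0 < N ∧
      ∀ (k : ℤ) (x : ℝ), ‖f (x + (k : ℝ) * (N : ℝ)) - f x‖ < ε

/-- `F : ℝ → ℝ` is a lift of `f : ℝ → S¹ ⊆ ℂ` if `F` is continuous and
`f x = e^{2 π i F x}` for all `x`. -/
def IsLift (f : ℝ → ℂ) (F : ℝ → ℝ) : Prop :=
  Continuous F ∧ ∀ x : ℝ, f x = Complex.exp (2 * Real.pi * Complex.I * (F x : ℂ))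

/-- The generalized winding number is additive: if pre-periodic functions `f` and `g` have
generalized winding numbers `a` and `b` (witnessed by lifts `F`, `G`), then the pointwise
product `f * g` is pre-periodic and its generalized winding number is `a + b`. -/
theorem generalized_winding_number_mul (f g : ℝ → ℂ) (F G : ℝ → ℝ) (a b : ℝ)
    (hf : PrePeriodic f) (hg : PrePeriodic g)
    (hF : IsLift f F) (hG : IsLift g G)
    (ha : Tendsto (fun x : ℝ => (F x - F (-x)) / (2 * x)) atTop (nhds a))
    (hb : Tendsto (fun x : ℝ => (G x - G (-x)) / (2 * x)) atTop (nhds b)) :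
    PrePeriodic (fun x => f x * g x) ∧
      ∀ H : ℝ → ℝ, IsLift (fun x => f x * g x) H →
        Tendsto (fun x : ℝ => (H x - H (-x)) / (2 * x)) atTop (nhds (a + b)) := by
  obtain ⟨hfc, hfn, hfp⟩ := hf
  obtain ⟨hgc, hgn, hgp⟩ := hg
  constructor
  · refine ⟨hfc.mul hgc, fun x => by simp [hfn x, hgn x], ?_⟩
    intro ε hε
    obtain ⟨N₁, hN₁, h₁⟩ := hfp (ε / 2) (by linarith)
    obtain ⟨N₂, hN₂, h₂⟩ := hgp (ε / 2) (by linarith)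
    refine ⟨N₁ * N₂, Nat.mul_pos hN₁ hN₂, fun k x => ?_⟩
    have e1 : (k : ℝ) * ((N₁ * N₂ : ℕ) : ℝ) = ((k * N₂ : ℤ) : ℝ) * (N₁ : ℝ) := by
      push_cast; ring
    have e2 : (k : ℝ) * ((N₁ * N₂ : ℕ) : ℝ) = ((k * N₁ : ℤ) : ℝ) * (N₂ : ℝ) := by
      push_cast; ring
    set y := x + (k : ℝ) * ((N₁ * N₂ : ℕ) : ℝ) with hy
    have hfy : ‖f y - f x‖ < ε / 2 := by rw [hy, e1]; exact h₁ _ _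
    have hgy : ‖g y - g x‖ < ε / 2 := by rw [hy, e2]; exact h₂ _ _
    have key : f y * g y - f x * g x = (f y - f x) * g y + f x * (g y - g x) := by ring
    calc ‖f y * g y - f x * g x‖ ≤ ‖(f y - f x) * g y‖ + ‖f x * (g y - g x)‖ := by
          rw [key]; exact norm_add_le _ _
      _ = ‖f y - f x‖ * 1 + 1 * ‖g y - g x‖ := by
          rw [norm_mul, norm_mul, hgn y, hfn x]
      _ < ε := by rw [mul_one, one_mul]; linarith
  · intro H hH
    -- H - F - G is an integer-valued continuous function, hence constant
    have h2pi : (2 * (Real.pi : ℂ) * Complex.I) ≠ 0 := by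
      simp [Real.pi_ne_zero, Complex.I_ne_zero]
    set D : ℝ → ℝ := fun x => H x - F x - G x with hD
    have hint : ∀ x : ℝ, ∃ n : ℤ, D x = n := by
      intro x
      have h1 : Complex.exp (2 * Real.pi * Complex.I * (H x : ℂ)) =
          Complex.exp (2 * Real.pi * Complex.I * (F x : ℂ)) *
          Complex.exp (2 * Real.pi * Complex.I * (G x : ℂ)) := by
        rw [← hH.2 x, ← hF.2 x, ← hG.2 x]
      rw [← Complex.exp_add] at h1
      have h2 : Complex.exp (2 * Real.pi * Complex.I * (H x : ℂ) -
          (2 * Real.pi * Complex.I * (F x : ℂ) + 2 * Real.pi * Complex.I * (G x : ℂ))) = 1 := by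
        rw [Complex.exp_sub, h1, div_self (Complex.exp_ne_zero _)]
      rw [Complex.exp_eq_one_iff] at h2
      obtain ⟨n, hn⟩ := h2
      refine ⟨n, ?_⟩
      have key : (2 * Real.pi * Complex.I) * ((H x : ℂ) - (F x) - (G x)) =
          (2 * Real.pi * Complex.I) * (n : ℂ) := by
        linear_combination hn
      have := mul_left_cancel₀ h2pi key
      have : ((H x - F x - G x : ℝ) : ℂ) = ((n : ℝ) : ℂ) := by push_cast; exact this
      exact Complex.ofReal_injective this
    have hDc : Continuous D := (hH.1.sub hF.1).sub hG.1
    have hconst : ∀ x : ℝ, D x = D 0 := by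
      intro x
      by_contra hne
      obtain ⟨n, hn⟩ := hint x
      obtain ⟨m, hm⟩ := hint 0
      have hmn : m ≠ n := by
        intro h; apply hne; rw [hn, hm, h]
      set c : ℝ := (min m n : ℤ) + 1/2 with hc
      have hmem : c ∈ Set.uIcc (D 0) (D x) := by
        rw [hm, hn, Set.uIcc_eq_union]
        rcases le_total m n with h | h
        · left
          constructor
          · simp [hc, min_eq_left h]
          · have : (m : ℝ) + 1 ≤ n := by
              exact_mod_cast Int.add_one_le_of_lt (lt_of_le_of_ne h hmn)
            simp only [hc, min_eq_left h]; push_cast; linarith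
        · right
          constructor
          · simp [hc, min_eq_right h]
          · have : (n : ℝ) + 1 ≤ m := by
              exact_mod_cast Int.add_one_le_of_lt (lt_of_le_of_ne h (Ne.symm hmn))
            simp only [hc, min_eq_right h]; push_cast; linarith
      obtain ⟨y, _, hy⟩ := intermediate_value_uIcc (hDc.continuousOn (s := Set.uIcc 0 x)) hmem
      obtain ⟨p, hp⟩ := hint y
      have hpc : (p : ℝ) = (min m n : ℤ) + 1/2 := by rw [← hp, hy, hc]
      have h2 : ((2 * p : ℤ) : ℝ) = ((2 * min m n + 1 : ℤ) : ℝ) := by push_cast at hpc ⊢; linarith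
      have := Int.cast_injective (α := ℝ) h2
      omega
    have heq : ∀ x : ℝ, H x - H (-x) = (F x - F (-x)) + (G x - G (-x)) := by
      intro x
      have h1 := hconst x
      have h2 := hconst (-x)
      simp only [hD] at h1 h2
      linarith
    have : (fun x : ℝ => (H x - H (-x)) / (2 * x)) =
        fun x : ℝ => (F x - F (-x)) / (2 * x) + (G x - G (-x)) / (2 * x) := by
      funext x; rw [heq x, add_div]
    rw [this]
    exact ha.add hb
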